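/- arXiv:1503.01098 — 2 statements merged into one kernel-verified Lean document; each statement's English description precedes it below -/
import Mathlib

section
/- Let G be a graph, r a positive integer, and C a clique class of G with |C| > r. Let G' be the graph obtained from G by deleting all but r vertices of C. Then, for every positive integers k and t with t ≤ r, G admits a k-equistable structure with target t if and only if G' admits a k-equistable structure with target t. -/
open Finset

variable {V : Type*}

/-- Two vertices are twins if they have the same neighbors other than each other. -/
def Twins (G : SimpleGraph V) (u v : V) : Prop :=
  G.neighborSet u \ {v} = G.neighborSet v \ {u}

/-- A twin class is an equivalence class of the twin relation. -/
def TwinClass (G : SimpleGraph V) (C : Set V) : Prop :=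
  ∃ u, C = {v | Twins G u v}

/-- A stable (independent) set of vertices. -/
def IsStable (G : SimpleGraph V) (S : Set V) : Prop :=
  ∀ ⦃x⦄, x ∈ S → ∀ ⦃y⦄, y ∈ S → ¬ G.Adj x y

/-- A maximal stable set. -/
def IsMaxStable [Fintype V] [DecidableEq V] (G : SimpleGraph V) (S : Finset V) : Prop :=
  IsStable G ↑S ∧ ∀ T : Finset V, IsStable G ↑T → S ⊆ T → S = T

/-- `(w, t)` is an equistable structure of `G`: a set is a maximal stable set
iff its total weight is `t`. -/
def EquistableStruct [Fintype V] [DecidableEq V] (G : SimpleGraph V) (w : V → ℕ) (t : ℕ) : Prop :=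
  ∀ S : Finset V, IsMaxStable G S ↔ ∑ x ∈ S, w x = t

/-- `G` is `k`-equistable: it has an equistable structure with weights in `{1,…,k}`. -/
def KEquistable [Fintype V] [DecidableEq V] (G : SimpleGraph V) (k : ℕ) : Prop :=
  ∃ t : ℕ, 0 < t ∧ ∃ w : V → ℕ, (∀ x, 1 ≤ w x ∧ w x ≤ k) ∧ EquistableStruct G w t

/-- `G` is target-`t` equistable: it has an equistable structure with positive
integer weights and target `t`. -/
def TargetEquistable [Fintype V] [DecidableEq V] (G : SimpleGraph V) (t : ℕ) : Prop :=
  ∃ w : V → ℕ, (∀ x, 1 ≤ w x) ∧ EquistableStruct G w t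

/-!
Two vertices of a clique class are adjacent twins, so exchanging one for the other in a maximal
stable set gives a maximal stable set; hence every equistable weighting is constant on the class.
A maximal stable set of `G'` stays maximal in `G`: a vertex of `C \ D` is adjacent to a vertex `d`
of `D` and to all neighbours of `d` in `G'`. Conversely, extend a structure of `G'` to `C` by the
common weight of `D`. Whether a set `S` is maximal stable in `G`, and its weight, depend only on
`S \ C` and `|S ∩ C|`. If `|S ∩ C| ≤ r`, `S` can therefore be moved into `G'`; otherwise `S` is not
stable, and its weight exceeds `r ≥ t` because all weights are positive.
-/

theorem twins_iff {G : SimpleGraph V} {u v : V} :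
    Twins G u v ↔ ∀ x, x ≠ u → x ≠ v → (G.Adj u x ↔ G.Adj v x) := by
  simp only [Twins, Set.ext_iff, Set.mem_sdiff, SimpleGraph.mem_neighborSet,
    Set.mem_singleton_iff]
  refine forall_congr' fun x => ⟨fun h hxu hxv => by simpa [hxu, hxv] using h, fun h => ?_⟩
  by_cases hxu : x = u
  · subst hxu; simp
  by_cases hxv : x = v
  · subst hxv; simp
  simp [h hxu hxv, hxu, hxv]

namespace Twins

variable {G : SimpleGraph V} {u v : V}

theorem adj_iff (h : Twins G u v) {x : V} (hxu : x ≠ u) (hxv : x ≠ v) :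
    G.Adj u x ↔ G.Adj v x :=
  twins_iff.1 h x hxu hxv

theorem induce {s : Set V} {u v : s} (h : Twins G u v) : Twins (G.induce s) u v :=
  twins_iff.2 fun _ hxu hxv => h.adj_iff (Subtype.coe_ne_coe.2 hxu) (Subtype.coe_ne_coe.2 hxv)

end Twins

theorem TwinClass.twins_of_isClique {G : SimpleGraph V} {C : Set V} (hC : TwinClass G C)
    (hcl : G.IsClique C) {c d : V} (hc : c ∈ C) (hd : d ∈ C) : Twins G c d := by
  obtain ⟨u, rfl⟩ := hC
  have hu : u ∈ {v | Twins G u v} := rfl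
  refine twins_iff.2 fun x hxc hxd => ?_
  by_cases hxu : x = u
  · subst hxu
    exact iff_of_true (hcl hc hu hxc.symm) (hcl hd hu hxd.symm)
  · exact (Twins.adj_iff hc hxu hxc).symm.trans (Twins.adj_iff hd hxu hxd)

theorem isStable_insert [DecidableEq V] {G : SimpleGraph V} {v : V} {S : Finset V} :
    IsStable G ↑(insert v S) ↔ IsStable G ↑S ∧ ∀ x ∈ S, ¬ G.Adj v x := by
  simp only [IsStable, coe_insert, Set.mem_insert_iff, mem_coe]
  refine ⟨fun h => ⟨fun x hx y hy => h (.inr hx) (.inr hy), fun x hx => h (.inl rfl) (.inr hx)⟩,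
    ?_⟩
  rintro ⟨hS, hv⟩ x (rfl | hx) y (rfl | hy)
  · exact G.irrefl
  · exact hv y hy
  · exact fun h => hv x hx h.symm
  · exact hS hx hy

section MaxStable

variable [Fintype V] [DecidableEq V] {G : SimpleGraph V}

theorem isMaxStable_iff {S : Finset V} :
    IsMaxStable G S ↔ IsStable G ↑S ∧ ∀ v ∉ S, ∃ x ∈ S, G.Adj v x := by
  refine ⟨fun h => ⟨h.1, fun v hv => ?_⟩, fun h => ⟨h.1, fun T hT hST => ?_⟩⟩
  · by_contra! hfree
    exact hv (h.2 _ (isStable_insert.2 ⟨h.1, hfree⟩) (subset_insert v S) ▸ mem_insert_self v S)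
  · refine hST.antisymm fun v hvT => ?_
    by_contra hvS
    obtain ⟨x, hxS, hvx⟩ := h.2 v hvS
    exact hT (mem_coe.2 hvT) (mem_coe.2 (hST hxS)) hvx

theorem exists_isMaxStable_superset {S : Finset V} (hS : IsStable G ↑S) :
    ∃ T, S ⊆ T ∧ IsMaxStable G T := by
  obtain ⟨T, hST, hT⟩ := Finite.exists_le_maximal (p := fun T : Finset V => IsStable G ↑T) hS
  exact ⟨T, hST, hT.1, fun T' hT' h => h.antisymm (hT.2 hT' h)⟩

theorem IsMaxStable.insert_twin {c d : V} {A : Finset V} (hmax : IsMaxStable G (insert c A))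
    (htw : Twins G c d) (hcd : G.Adj c d) (hc : c ∉ A) (hd : d ∉ A) :
    IsMaxStable G (insert d A) := by
  obtain ⟨hstab, hdom⟩ := isMaxStable_iff.1 hmax
  obtain ⟨hA, hcA⟩ := isStable_insert.1 hstab
  have hne : ∀ {x}, x ∈ A → x ≠ c ∧ x ≠ d := fun hx => ⟨ne_of_mem_of_not_mem hx hc,
    ne_of_mem_of_not_mem hx hd⟩
  refine isMaxStable_iff.2 ⟨isStable_insert.2 ⟨hA, fun x hx => ?_⟩, fun v hv => ?_⟩
  · exact (htw.adj_iff (hne hx).1 (hne hx).2).not.1 (hcA x hx)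
  obtain ⟨hvd, hvA⟩ : v ≠ d ∧ v ∉ A := by simpa using hv
  by_cases hvc : v = c
  · exact ⟨d, mem_insert_self d A, hvc ▸ hcd⟩
  obtain ⟨x, hx, hvx⟩ := hdom v (by simp [hvc, hvA])
  rcases mem_insert.1 hx with rfl | hxA
  · exact ⟨d, mem_insert_self d A, (htw.adj_iff hvc hvd |>.1 hvx.symm).symm⟩
  · exact ⟨x, mem_insert_of_mem hxA, hvx⟩

theorem EquistableStruct.weight_eq_of_twins {w : V → ℕ} {t : ℕ} (h : EquistableStruct G w t)
    {c d : V} (htw : Twins G c d) (hcd : G.Adj c d) : w c = w d := by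
  obtain ⟨S, hcS, hS⟩ := exists_isMaxStable_superset (G := G) (S := {c}) (by simp [IsStable])
  have hc : c ∉ S.erase c := notMem_erase c S
  have hd : d ∉ S.erase c := fun hd =>
    hS.1 (mem_coe.2 (hcS (mem_singleton_self c))) (mem_coe.2 (mem_of_mem_erase hd)) hcd
  rw [← insert_erase (hcS (mem_singleton_self c))] at hS
  have hS' := hS.insert_twin htw hcd hc hd
  rw [h, sum_insert hc] at hS
  rw [h, sum_insert hd] at hS'
  omega

end MaxStable

section TwinClique

variable [DecidableEq V] {G : SimpleGraph V} {C : Finset V}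

theorem not_isStable_of_one_lt_card_inter (hcl : G.IsClique (↑C : Set V)) {S : Finset V}
    (h : 1 < #(S ∩ C)) : ¬ IsStable G ↑S := by
  obtain ⟨a, ha, b, hb, hab⟩ := one_lt_card.1 h
  rw [mem_inter] at ha hb
  exact fun hS => hS (mem_coe.2 ha.1) (mem_coe.2 hb.1) (hcl (mem_coe.2 ha.2) (mem_coe.2 hb.2) hab)

theorem eq_insert_sdiff_of_inter_eq_singleton {S : Finset V} {c : V} (h : S ∩ C = {c}) :
    S = insert c (S \ C) := by
  rw [insert_eq, ← h, union_comm, sdiff_union_inter]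

theorem isMaxStable_iff_of_sdiff_eq [Fintype V] (hcl : G.IsClique (↑C : Set V))
    (htw : (↑C : Set V).Pairwise (Twins G)) {S T : Finset V} (hsd : S \ C = T \ C)
    (hcard : #(S ∩ C) = #(T ∩ C)) : IsMaxStable G S ↔ IsMaxStable G T := by
  rcases lt_or_ge 1 #(S ∩ C) with hlt | hle
  · exact iff_of_false (fun hS => not_isStable_of_one_lt_card_inter hcl hlt hS.1)
      (fun hT => not_isStable_of_one_lt_card_inter hcl (hcard ▸ hlt) hT.1)
  rcases Nat.le_one_iff_eq_zero_or_eq_one.1 hle with h0 | h1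
  · have hS := sdiff_union_inter S C
    have hT := sdiff_union_inter T C
    rw [card_eq_zero.1 h0, union_empty] at hS
    rw [card_eq_zero.1 (hcard ▸ h0 : #(T ∩ C) = 0), union_empty] at hT
    rw [← hS, ← hT, hsd]
  obtain ⟨c, hc⟩ := card_eq_one.1 h1
  obtain ⟨d, hd⟩ := card_eq_one.1 (hcard ▸ h1)
  have hcC : c ∈ C := (mem_inter.1 (hc ▸ mem_singleton_self c)).2
  have hdC : d ∈ C := (mem_inter.1 (hd ▸ mem_singleton_self d)).2
  rw [eq_insert_sdiff_of_inter_eq_singleton hc, eq_insert_sdiff_of_inter_eq_singleton hd, hsd]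
  have hc' : c ∉ T \ C := fun h => (mem_sdiff.1 h).2 hcC
  have hd' : d ∉ T \ C := fun h => (mem_sdiff.1 h).2 hdC
  rcases eq_or_ne c d with rfl | hne
  · rfl
  exact ⟨fun h => h.insert_twin (htw hcC hdC hne) (hcl hcC hdC hne) hc' hd',
    fun h => h.insert_twin (htw hdC hcC hne.symm) (hcl hdC hcC hne.symm) hd' hc'⟩

theorem sum_eq_of_sdiff_eq {w : V → ℕ} {a : ℕ} (hw : ∀ c ∈ C, w c = a) {S T : Finset V}
    (hsd : S \ C = T \ C) (hcard : #(S ∩ C) = #(T ∩ C)) :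
    ∑ x ∈ S, w x = ∑ x ∈ T, w x := by
  have key : ∀ S : Finset V, ∑ x ∈ S, w x = #(S ∩ C) * a + ∑ x ∈ S \ C, w x := fun S => by
    rw [← sum_inter_add_sum_sdiff S C, sum_congr rfl fun x hx => hw x (mem_inter.1 hx).2,
      sum_const, smul_eq_mul]
  rw [key S, key T, hcard, hsd]

theorem equistableStruct_of_forall_subset_compl_union [Fintype V] (hcl : G.IsClique (↑C : Set V))
    (htw : (↑C : Set V).Pairwise (Twins G)) {D : Finset V} (hDC : D ⊆ C) (hD : D.Nonempty)
    {w : V → ℕ} {a t : ℕ} (hw : ∀ x, 1 ≤ w x) (hwC : ∀ c ∈ C, w c = a) (htD : t ≤ #D)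
    (h : ∀ S ⊆ Cᶜ ∪ D, IsMaxStable G S ↔ ∑ x ∈ S, w x = t) : EquistableStruct G w t := by
  intro S
  rcases le_or_gt #(S ∩ C) #D with hle | hlt
  · obtain ⟨E, hED, hE⟩ := exists_subset_card_eq hle
    have hEC : E ⊆ C := hED.trans hDC
    have hsd : (S \ C ∪ E) \ C = S \ C := by
      ext x; simp only [mem_sdiff, mem_union]; grind
    have hcard : #((S \ C ∪ E) ∩ C) = #(S ∩ C) := by
      rw [union_inter_distrib_right, sdiff_inter_self, empty_union, inter_eq_left.2 hEC, hE]
    rw [isMaxStable_iff_of_sdiff_eq hcl htw hsd.symm hcard.symm,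
      sum_eq_of_sdiff_eq hwC hsd.symm hcard.symm]
    exact h _ (union_subset_union (fun x hx => mem_compl.2 (mem_sdiff.1 hx).2) hED)
  · refine iff_of_false (fun hS => not_isStable_of_one_lt_card_inter hcl ?_ hS.1) fun hsum => ?_
    · exact lt_of_le_of_lt hD.card_pos hlt
    · have : #S ≤ t := by simpa [← hsum] using card_nsmul_le_sum S w 1 fun x _ => hw x
      have := card_le_card (inter_subset_left (s₁ := S) (s₂ := C))
      omega

end TwinClique

def DominatesFromOutside (G : SimpleGraph V) (s : Finset V) : Prop :=
  ∀ v ∉ s, ∃ u ∈ s, G.Adj v u ∧ ∀ x ∈ s, G.Adj u x → G.Adj v x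

theorem isStable_induce_iff {G : SimpleGraph V} {s : Finset V} (S : Finset ↥(↑s : Set V)) :
    IsStable (G.induce ↑s) ↑S ↔ IsStable G ↑(S.map (Function.Embedding.subtype _)) := by
  simp only [IsStable, mem_coe, mem_map, Function.Embedding.coe_subtype, SimpleGraph.induce_adj]
  refine ⟨?_, fun h x hx y hy => h ⟨x, hx, rfl⟩ ⟨y, hy, rfl⟩⟩
  rintro h _ ⟨x, hx, rfl⟩ _ ⟨y, hy, rfl⟩
  exact h hx hy

section Induce

variable [Fintype V] [DecidableEq V] {G : SimpleGraph V} {s : Finset V}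

theorem isMaxStable_induce_iff (hdom : DominatesFromOutside G s) (S : Finset ↥(↑s : Set V)) :
    IsMaxStable (G.induce ↑s) S ↔ IsMaxStable G (S.map (Function.Embedding.subtype _)) := by
  have hmem : ∀ {v} (hv : v ∈ s), v ∈ S.map (Function.Embedding.subtype _) ↔ ⟨v, hv⟩ ∈ S :=
    fun hv => mem_map' (Function.Embedding.subtype _) (a := ⟨_, hv⟩)
  rw [isMaxStable_iff, isMaxStable_iff, isStable_induce_iff]
  refine and_congr_right fun _ => ⟨fun h v hv => ?_, fun h v hv => ?_⟩
  · by_cases hvs : v ∈ s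
    · obtain ⟨x, hx, hvx⟩ := h ⟨v, hvs⟩ ((hmem hvs).not.1 hv)
      exact ⟨x, mem_map_of_mem _ hx, hvx⟩
    obtain ⟨u, hus, hvu, hu⟩ := hdom v hvs
    by_cases huS : ⟨u, hus⟩ ∈ S
    · exact ⟨u, (hmem hus).2 huS, hvu⟩
    obtain ⟨x, hx, hux⟩ := h ⟨u, hus⟩ huS
    exact ⟨x, mem_map_of_mem _ hx, hu x x.2 hux⟩
  · obtain ⟨_, hx, hvx⟩ := h v (hmem v.2 |>.not.2 hv)
    obtain ⟨x, hxS, rfl⟩ := mem_map.1 hx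
    exact ⟨x, hxS, hvx⟩

theorem equistableStruct_induce_iff (hdom : DominatesFromOutside G s) (w : V → ℕ) (t : ℕ) :
    EquistableStruct (G.induce ↑s) (fun x => w x) t ↔
      ∀ S ⊆ s, IsMaxStable G S ↔ ∑ x ∈ S, w x = t := by
  refine ⟨fun h S hS => ?_, fun h S => ?_⟩
  · obtain ⟨S, rfl⟩ : ∃ S' : Finset ↥(↑s : Set V), S'.map (Function.Embedding.subtype _) = S :=
      ⟨S.subtype (· ∈ (↑s : Set V)), subtype_map_of_mem hS⟩
    rw [← isMaxStable_induce_iff hdom, h, sum_map]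
    rfl
  · rw [isMaxStable_induce_iff hdom, h _ fun x hx => ?_, sum_map]
    · rfl
    · obtain ⟨y, -, rfl⟩ := mem_map.1 hx
      exact y.2

end Induce

theorem dominatesFromOutside_compl_union [Fintype V] [DecidableEq V] {G : SimpleGraph V}
    {C D : Finset V} (hcl : G.IsClique (↑C : Set V)) (htw : (↑C : Set V).Pairwise (Twins G))
    (hDC : D ⊆ C) {d : V} (hd : d ∈ D) : DominatesFromOutside G (Cᶜ ∪ D) := by
  intro v hv
  obtain ⟨hvC, hvD⟩ : v ∈ C ∧ v ∉ D := by simpa using hv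
  have hvd : v ≠ d := fun h => hvD (h ▸ hd)
  refine ⟨d, mem_union_right _ hd, hcl hvC (hDC hd) hvd, fun x hx hdx => ?_⟩
  have hxv : x ≠ v := ne_of_mem_of_not_mem hx hv
  exact (htw (hDC hd) hvC hvd.symm |>.adj_iff (G.ne_of_adj hdx).symm hxv).1 hdx

def retractOnto [DecidableEq V] (s : Finset V) {d : V} (hd : d ∈ s) (x : V) :
    ↥(↑s : Set V) :=
  if hx : x ∈ s then ⟨x, hx⟩ else ⟨d, hd⟩

theorem retractOnto_coe [DecidableEq V] {s : Finset V} {d : V} (hd : d ∈ s) (x : ↥(↑s : Set V)) :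
    retractOnto s hd x = x :=
  dif_pos x.2

theorem equistableStruct_comp_retractOnto [Fintype V] [DecidableEq V] {G : SimpleGraph V}
    {C D : Finset V} (hcl : G.IsClique (↑C : Set V)) (htw : (↑C : Set V).Pairwise (Twins G))
    (hDC : D ⊆ C) {d : V} (hd : d ∈ D) {t : ℕ} (htD : t ≤ #D)
    {w : ↥(↑(Cᶜ ∪ D) : Set V) → ℕ} (hw : ∀ x, 1 ≤ w x)
    (h : EquistableStruct (G.induce ↑(Cᶜ ∪ D)) w t) :
    EquistableStruct G (fun x => w (retractOnto (Cᶜ ∪ D) (mem_union_right _ hd) x)) t := by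
  set ρ := retractOnto (Cᶜ ∪ D) (mem_union_right _ hd)
  have hρC : ∀ c ∈ C, ↑(ρ c) ∈ D := fun c hc => by
    unfold ρ retractOnto
    split_ifs with hcs
    · simpa [hc] using hcs
    · exact hd
  have hwC : ∀ c ∈ C, w (ρ c) = w ⟨d, mem_union_right _ hd⟩ := fun c hc => by
    by_cases hcd : (ρ c : V) = d
    · exact congrArg w (Subtype.ext hcd)
    exact h.weight_eq_of_twins (htw (hDC (hρC c hc)) (hDC hd) hcd).induce
      (hcl (hDC (hρC c hc)) (hDC hd) hcd)
  refine equistableStruct_of_forall_subset_compl_union hcl htw hDC ⟨d, hd⟩ (fun _ => hw _) hwC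
    htD ?_
  rw [← equistableStruct_induce_iff (dominatesFromOutside_compl_union hcl htw hDC hd)]
  simpa only [ρ, retractOnto_coe] using h

theorem stmt8_general [Fintype V] [DecidableEq V] (G : SimpleGraph V) (r k t : ℕ)
    (hr : 0 < r) (htr : t ≤ r)
    (C : Finset V) (hC : TwinClass G ↑C) (hclique : G.IsClique (↑C : Set V))
    (D : Finset V) (hD : D ⊆ C) (hDr : D.card = r) :
    (∃ w : V → ℕ, (∀ x, 1 ≤ w x ∧ w x ≤ k) ∧ EquistableStruct G w t) ↔
    (∃ w : ↥(↑(Cᶜ ∪ D) : Set V) → ℕ, (∀ x, 1 ≤ w x ∧ w x ≤ k) ∧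
      EquistableStruct (G.induce ↑(Cᶜ ∪ D)) w t) := by
  have htw : (↑C : Set V).Pairwise (Twins G) := fun _ hc _ hd _ =>
    hC.twins_of_isClique hclique hc hd
  obtain ⟨d, hd⟩ : D.Nonempty := card_pos.1 (hDr ▸ hr)
  have hdom := dominatesFromOutside_compl_union hclique htw hD hd
  constructor
  · rintro ⟨w, hw, hwt⟩
    exact ⟨_, fun x => hw x, (equistableStruct_induce_iff hdom w t).2 fun S _ => hwt S⟩
  · rintro ⟨w, hw, hwt⟩
    exact ⟨_, fun x => hw _, equistableStruct_comp_retractOnto hclique htw hD hd (hDr ▸ htr)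
      (fun x => (hw x).1) hwt⟩

theorem stmt8 [Fintype V] [DecidableEq V] (G : SimpleGraph V) (r k t : ℕ)
    (hr : 0 < r) (hk : 0 < k) (ht : 0 < t) (htr : t ≤ r)
    (C : Finset V) (hC : TwinClass G ↑C) (hclique : G.IsClique (↑C : Set V))
    (hCr : r < C.card) (D : Finset V) (hD : D ⊆ C) (hDr : D.card = r) :
    (∃ w : V → ℕ, (∀ x, 1 ≤ w x ∧ w x ≤ k) ∧ EquistableStruct G w t) ↔
    (∃ w : ↥(↑(Cᶜ ∪ D) : Set V) → ℕ, (∀ x, 1 ≤ w x ∧ w x ≤ k) ∧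
      EquistableStruct (G.induce ↑(Cᶜ ∪ D)) w t) :=
  stmt8_general G r k t hr htr C hC hclique D hD hDr
end

section
/- Let G be a graph with a stable set twin class X such that X misses all other twin classes (X is a union of isolated-module vertices, i.e., X corresponds to an isolated vertex in the quotient graph), |X| ≥ k⁵, and |V(G) \ X| ≤ k³. Then G is k-equistable if and only if G admits a k-equistable function that is constant on X. -/
open Finset

variable {V : Type*}

/-- Every stable set extends to a maximal stable set. -/
theorem exists_maxStable_superset [Fintype V] [DecidableEq V] (G : SimpleGraph V)
    (T : Finset V) (hT : IsStable G ↑T) : ∃ S : Finset V, T ⊆ S ∧ IsMaxStable G S := by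
  classical
  obtain ⟨S, hS, hmax⟩ := Finset.exists_max_image
      ((Finset.univ.powerset).filter fun U : Finset V => IsStable G ↑U ∧ T ⊆ U) Finset.card
      ⟨T, by simp [hT]⟩
  simp only [Finset.mem_filter] at hS
  refine ⟨S, hS.2.2, hS.2.1, ?_⟩
  intro U hU hSU
  have hUmem : U ∈ (Finset.univ.powerset).filter (fun U : Finset V => IsStable G ↑U ∧ T ⊆ U) :=
    Finset.mem_filter.2 ⟨Finset.mem_powerset.2 (Finset.subset_univ U), hU, hS.2.2.trans hSU⟩
  exact Finset.eq_of_subset_of_card_le hSU (hmax U hUmem)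

theorem stmt12 [Fintype V] [DecidableEq V] (G : SimpleGraph V) (k : ℕ)
    (X : Finset V) (hX : TwinClass G ↑X) (hXs : IsStable G ↑X)
    (hiso : ∀ x ∈ X, ∀ y, y ∉ X → ¬ G.Adj x y)
    (hXbig : k ^ 5 ≤ X.card) (hsmall : Xᶜ.card ≤ k ^ 3) :
    KEquistable G k ↔
      ∃ t : ℕ, 0 < t ∧ ∃ w : V → ℕ, (∀ x, 1 ≤ w x ∧ w x ≤ k) ∧
        EquistableStruct G w t ∧ ∀ x ∈ X, ∀ y ∈ X, w x = w y := by
  classical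
  constructor
  · rintro ⟨t, ht, w, hw, hE⟩
    rcases X.eq_empty_or_nonempty with hXe | hXne
    · exact ⟨t, ht, w, hw, hE, by simp [hXe]⟩
    obtain ⟨x₀, hx₀⟩ := hXne
    have hk : 1 ≤ k := le_trans (hw x₀).1 (hw x₀).2
    have hkpos : 0 < k := hk
    -- every vertex of X is isolated
    have hIso : ∀ x ∈ X, ∀ y, ¬ G.Adj x y := by
      intro x hx y
      by_cases hy : y ∈ X
      · exact hXs (Finset.mem_coe.2 hx) (Finset.mem_coe.2 hy)
      · exact hiso x hx y hy
    -- every maximal stable set contains X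
    have hsub : ∀ S : Finset V, IsMaxStable G S → X ⊆ S := by
      intro S hS x hx
      by_contra hxS
      have hstable : IsStable G ↑(insert x S) := by
        intro a ha b hb
        simp only [Finset.coe_insert, Set.mem_insert_iff, Finset.mem_coe] at ha hb
        rcases ha with rfl | ha
        · exact hIso _ hx _
        rcases hb with rfl | hb
        · intro h; exact hIso _ hx _ h.symm
        · exact hS.1 (Finset.mem_coe.2 ha) (Finset.mem_coe.2 hb)
      have heq := hS.2 _ hstable (Finset.subset_insert x S)
      exact hxS (heq ▸ Finset.mem_insert_self x S)
    set s := ∑ x ∈ X, w x with hs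
    obtain ⟨S₀, hXS₀, hS₀⟩ := exists_maxStable_superset G X hXs
    have hst : s ≤ t := by
      have h0 := (hE S₀).1 hS₀
      calc s ≤ ∑ x ∈ S₀, w x := Finset.sum_le_sum_of_subset hXS₀
        _ = t := h0
    -- pigeonhole: a popular weight value c on X
    have hfib : X.card = ∑ c ∈ Finset.Icc 1 k, (X.filter fun x => w x = c).card :=
      Finset.card_eq_sum_card_fiberwise (fun x _ => Finset.mem_Icc.2 ⟨(hw x).1, (hw x).2⟩)
    have hc : ∃ c ∈ Finset.Icc 1 k, X.card ≤ k * (X.filter fun x => w x = c).card := by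
      by_contra hcon
      push_neg at hcon
      have h1 : ∑ c ∈ Finset.Icc 1 k, k * (X.filter fun x => w x = c).card
          < ∑ _c ∈ Finset.Icc 1 k, X.card :=
        Finset.sum_lt_sum_of_nonempty ⟨1, Finset.mem_Icc.2 ⟨le_refl 1, hk⟩⟩ hcon
      rw [← Finset.mul_sum, ← hfib, Finset.sum_const, Nat.card_Icc, smul_eq_mul,
        Nat.add_sub_cancel] at h1
      omega
    obtain ⟨c, hcIcc, hcbig⟩ := hc
    obtain ⟨hc1, hck⟩ := Finset.mem_Icc.1 hcIcc
    set Xc := X.filter fun x => w x = c with hXc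
    have hXccard : k ^ 4 ≤ Xc.card := by
      have h2 : k * k ^ 4 ≤ k * Xc.card := by
        calc k * k ^ 4 = k ^ 5 := by ring
          _ ≤ X.card := hXbig
          _ ≤ k * Xc.card := hcbig
      exact Nat.le_of_mul_le_mul_left h2 hkpos
    -- the new weight function
    set w' : V → ℕ := fun x => if x ∈ X then c else w x with hw'
    set t' : ℕ := c * X.card + (t - s) with ht'
    have hXcardpos : 0 < X.card := Finset.card_pos.2 ⟨x₀, hx₀⟩
    refine ⟨t', by positivity, w', ?_, ?_, ?_⟩
    · intro x
      by_cases hx : x ∈ X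
      · simp [hw', hx, hc1, hck]
      · simp only [hw', if_neg hx]; exact hw x
    · intro S
      constructor
      · -- max stable ⇒ sum = t'
        intro hSmax
        have hXS : X ⊆ S := hsub S hSmax
        have hsumt : ∑ x ∈ S, w x = t := (hE S).1 hSmax
        have hsplit : ∑ x ∈ S \ X, w x + ∑ x ∈ X, w x = ∑ x ∈ S, w x :=
          Finset.sum_sdiff hXS
        have hsplit' : ∑ x ∈ S \ X, w' x + ∑ x ∈ X, w' x = ∑ x ∈ S, w' x :=
          Finset.sum_sdiff hXS
        have h3 : ∑ x ∈ S \ X, w' x = ∑ x ∈ S \ X, w x :=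
          Finset.sum_congr rfl fun x hx => by
            simp [hw', (Finset.mem_sdiff.1 hx).2]
        have h4 : ∑ x ∈ X, w' x = c * X.card := by
          rw [Finset.sum_congr rfl fun x hx => show w' x = c by simp [hw', hx]]
          simp [Finset.sum_const, mul_comm]
        rw [h3, h4] at hsplit'
        omega
      · -- sum = t' ⇒ max stable
        intro hsum'
        set A := S ∩ X with hA
        set B := S \ X with hB
        have hAX : A ⊆ X := Finset.inter_subset_right
        have hAS : A ⊆ S := Finset.inter_subset_left
        have hSA : S \ A = B := Finset.sdiff_inter_self_left S X
        have hsplit : ∑ x ∈ B, w' x + ∑ x ∈ A, w' x = ∑ x ∈ S, w' x := by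
          rw [← hSA]; exact Finset.sum_sdiff hAS
        have h3 : ∑ x ∈ B, w' x = ∑ x ∈ B, w x :=
          Finset.sum_congr rfl fun x hx => by
            simp [hw', (Finset.mem_sdiff.1 hx).2]
        have h4 : ∑ x ∈ A, w' x = c * A.card := by
          rw [Finset.sum_congr rfl fun x hx => show w' x = c by simp [hw', hAX hx]]
          simp [Finset.sum_const, mul_comm]
        rw [h3, h4, hsum'] at hsplit
        -- hsplit : ∑ B w + c * A.card = t' = c * X.card + (t - s)
        have hBXc : B ⊆ Xᶜ := fun x hx => Finset.mem_compl.2 (Finset.mem_sdiff.1 hx).2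
        have hBle : ∑ x ∈ B, w x ≤ k ^ 4 := by
          calc ∑ x ∈ B, w x ≤ ∑ _x ∈ B, k := Finset.sum_le_sum fun x _ => (hw x).2
            _ = B.card * k := by simp [Finset.sum_const, smul_eq_mul]
            _ ≤ k ^ 3 * k := by
                exact Nat.mul_le_mul_right k (le_trans (Finset.card_le_card hBXc) hsmall)
            _ = k ^ 4 := by ring
        have hAcard : A.card ≤ X.card := Finset.card_le_card hAX
        set m := X.card - A.card with hm
        have hXA : c * X.card = c * A.card + c * m := by
          rw [← Nat.mul_add]; congr 1; omega
        have hwB : ∑ x ∈ B, w x = c * m + (t - s) := by omega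
        have hcm : c * m ≤ k ^ 4 := by omega
        have hmle : m ≤ Xc.card := by
          have : m ≤ c * m := Nat.le_mul_of_pos_left m hc1
          omega
        obtain ⟨D, hDsub, hDcard⟩ := Finset.exists_subset_card_eq hmle
        have hDX : D ⊆ X := hDsub.trans (Finset.filter_subset _ _)
        set S' := (X \ D) ∪ B with hS'
        have hdisj : Disjoint (X \ D) B := by
          refine Finset.disjoint_left.2 fun x hx hxB => ?_
          exact (Finset.mem_sdiff.1 hxB).2 (Finset.mem_sdiff.1 hx).1
        have hDsum : ∑ x ∈ D, w x = c * m := by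
          rw [Finset.sum_congr rfl fun x hx => show w x = c from (Finset.mem_filter.1 (hDsub hx)).2]
          simp [Finset.sum_const, mul_comm, hDcard]
        have hXD : ∑ x ∈ X \ D, w x + ∑ x ∈ D, w x = s := Finset.sum_sdiff hDX
        have hS'sum : ∑ x ∈ S', w x = t := by
          rw [hS', Finset.sum_union hdisj]
          omega
        have hS'max : IsMaxStable G S' := (hE S').2 hS'sum
        have hXS' : X ⊆ S' := hsub S' hS'max
        have hD : D = ∅ := by
          rw [Finset.eq_empty_iff_forall_notMem]
          intro d hd
          have hdX : d ∈ X := hDX hd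
          rcases Finset.mem_union.1 (hXS' hdX) with h | h
          · exact (Finset.mem_sdiff.1 h).2 hd
          · exact (Finset.mem_sdiff.1 h).2 hdX
        have hm0 : m = 0 := by rw [hD] at hDcard; simpa using hDcard.symm
        have hAeq : A = X := Finset.eq_of_subset_of_card_le hAX (by omega)
        have hSeq : S = S' := by
          rw [hS', hD, Finset.sdiff_empty, ← hAeq]
          ext x
          simp only [Finset.mem_union, hA, hB, Finset.mem_inter, Finset.mem_sdiff]
          tauto
        rw [hSeq]; exact hS'max
    · intro x hx y hy
      simp [hw', hx, hy]
  · rintro ⟨t, ht, w, hw, hE, _⟩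
    exact ⟨t, ht, w, hw, hE⟩
end
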